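/- (Hurwitz) For the continued fraction algorithm with α = 1/2 (nearest-integer continued fractions), the denominators q'_n of the convergents of any irrational x satisfy q'_n / q'_{n+1} ≤ g = (√5−1)/2 for all n ≥ 0. -/

import Mathlib

noncomputable section

/-- `ᾱ = max(α, 1-α)`. -/
def abar (α : ℝ) : ℝ := max α (1 - α)

/-- The Nakada `α`-continued fraction map `A_α(x) = |1/x − ⌊1/x + 1 − α⌋|`. -/
def Amap (α x : ℝ) : ℝ := |1 / x - ⌊1 / x + 1 - α⌋|

/-- The orbit `x_{α,n} = A_α^n(x)`. -/
def xseq (α x : ℝ) (n : ℕ) : ℝ := (Amap α)^[n] x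

/-- The partial quotients `a_{α,n}`. -/
def dig (α x : ℝ) : ℕ → ℤ
  | 0 => ⌊x + 1 - abar α⌋
  | n + 1 => ⌊1 / xseq α x n + 1 - α⌋

/-- The signs `ε_{α,n} ∈ {±1}`. -/
def sgn (α x : ℝ) : ℕ → ℝ
  | 0 => Real.sign (x - ⌊x + 1 - abar α⌋)
  | n + 1 => Real.sign (1 / xseq α x n - ⌊1 / xseq α x n + 1 - α⌋)

/-- The matrix products defining the convergents:
`M_n = (1, a₀; 0, 1) · ∏_{k=1}^n (0, ε_{k−1}; 1, a_k)`. -/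
def Mmat (α x : ℝ) : ℕ → Matrix (Fin 2) (Fin 2) ℝ
  | 0 => !![1, (dig α x 0 : ℝ); 0, 1]
  | n + 1 => Mmat α x n * !![0, sgn α x n; 1, (dig α x (n + 1) : ℝ)]

/-- Numerator `p_{α,n}` of the `n`th convergent. -/
def pconv (α x : ℝ) (n : ℕ) : ℝ := Mmat α x n 0 1

/-- Denominator `q_{α,n}` of the `n`th convergent. -/
def qconv (α x : ℝ) (n : ℕ) : ℝ := Mmat α x n 1 1

/-- `β_{α,n} = ∏_{i=0}^n A_α^i(x)`. -/
def betaseq (α x : ℝ) (n : ℕ) : ℝ := ∏ i ∈ Finset.range (n + 1), xseq α x i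

/-!
Write `φ = (1 + √5) / 2` and `q_n = a_n q_{n-1} + ε_{n-1} q_{n-2}`. For irrational `x` every
digit satisfies `a_n ≥ 2`, and `a_n ≥ 3` whenever `ε_n = -1`. By induction, `q_n ≥ φ q_{n-1}`,
and even `q_n ≥ φ² q_{n-1}` when `ε_n = -1`. If `ε_n = 1` the next step is immediate from
`a_{n+1} ≥ 2 > φ` (and `3 > φ²`). If `ε_n = -1`, the stronger bound gives
`q_{n-1} ≤ φ⁻² q_n = (2 - φ) q_n`, so `q_{n+1} ≥ (a_{n+1} - 2 + φ) q_n`.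
-/

open Real Set
open scoped goldenRatio

theorem Irrational.abs_sub_round_lt_half {z : ℝ} (hz : Irrational z) : |z - round z| < 1 / 2 := by
  refine (abs_sub_round z).lt_of_ne fun h => ?_
  have hw := hz.sub_intCast (round z)
  rcases abs_eq (by norm_num : (0 : ℝ) ≤ 1 / 2) |>.mp h with h | h
  · exact hw.ne_rat (1 / 2) (by rw [h]; norm_num)
  · exact hw.ne_rat (-1 / 2) (by rw [h]; norm_num)

theorem Real.neg_of_sign_eq_neg_one {w : ℝ} (h : Real.sign w = -1) : w < 0 := by
  rcases lt_trichotomy w 0 with hw | rfl | hw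
  · exact hw
  · norm_num [Real.sign_zero] at h
  · norm_num [Real.sign_of_pos hw] at h

lemma two_le_round {z : ℝ} (hz : 2 < z) : 2 ≤ round z := by
  rw [round_eq, Int.le_floor]
  push_cast
  linarith

lemma three_le_round_of_sign_eq_neg_one {z : ℝ} (hz : 2 < z)
    (h : Real.sign (z - round z) = -1) : 3 ≤ round z := by
  have hlt : (2 : ℝ) < round z := by linarith [Real.neg_of_sign_eq_neg_one h]
  have : (2 : ℤ) < round z := by exact_mod_cast hlt
  omega

lemma two_lt_one_div {y : ℝ} (hy : y ∈ Ioo 0 (1 / 2)) : 2 < 1 / y := by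
  rw [lt_div_iff₀ hy.1]
  linarith [hy.2]

lemma Amap_half (y : ℝ) : Amap (1 / 2) y = |1 / y - round (1 / y)| := by
  rw [Amap, round_eq, add_sub_assoc]
  norm_num

lemma dig_half_succ (x : ℝ) (n : ℕ) : dig (1 / 2) x (n + 1) = round (1 / xseq (1 / 2) x n) := by
  rw [dig, round_eq, add_sub_assoc]
  norm_num

lemma sgn_half_succ (x : ℝ) (n : ℕ) :
    sgn (1 / 2) x (n + 1) =
      Real.sign (1 / xseq (1 / 2) x n - round (1 / xseq (1 / 2) x n)) := by
  rw [sgn, round_eq, add_sub_assoc]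
  norm_num

lemma xseq_succ (α x : ℝ) (n : ℕ) : xseq α x (n + 1) = Amap α (xseq α x n) :=
  Function.iterate_succ_apply' _ _ _

lemma Amap_half_mem {y : ℝ} (hy : Irrational y) :
    Irrational (Amap (1 / 2) y) ∧ Amap (1 / 2) y ∈ Ioo 0 (1 / 2) := by
  have hz : Irrational (1 / y) := by simpa only [one_div] using hy.inv
  have hw := hz.sub_intCast (round (1 / y))
  rw [Amap_half]
  refine ⟨?_, abs_pos.mpr hw.ne_zero, hz.abs_sub_round_lt_half⟩
  rcases abs_choice (1 / y - round (1 / y)) with h | h <;> rw [h]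
  · exact hw
  · exact hw.neg

lemma xseq_half_mem {x : ℝ} (hx : Irrational x) (hdom : x ∈ Ioo 0 (1 / 2)) (n : ℕ) :
    Irrational (xseq (1 / 2) x n) ∧ xseq (1 / 2) x n ∈ Ioo 0 (1 / 2) := by
  induction n with
  | zero => exact ⟨hx, hdom⟩
  | succ n ih =>
    rw [xseq_succ]
    exact Amap_half_mem ih.1

lemma two_le_dig_half_succ {x : ℝ} (hx : Irrational x) (hdom : x ∈ Ioo 0 (1 / 2)) (n : ℕ) :
    2 ≤ dig (1 / 2) x (n + 1) := by
  rw [dig_half_succ]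
  exact two_le_round (two_lt_one_div (xseq_half_mem hx hdom n).2)

lemma three_le_dig_half_succ {x : ℝ} (hx : Irrational x) (hdom : x ∈ Ioo 0 (1 / 2)) (n : ℕ)
    (h : sgn (1 / 2) x (n + 1) = -1) : 3 ≤ dig (1 / 2) x (n + 1) := by
  rw [sgn_half_succ] at h
  rw [dig_half_succ]
  exact three_le_round_of_sign_eq_neg_one (two_lt_one_div (xseq_half_mem hx hdom n).2) h

lemma sgn_half_eq_one_or_neg_one {x : ℝ} (hx : Irrational x) (hdom : x ∈ Ioo 0 (1 / 2))
    (n : ℕ) : sgn (1 / 2) x n = 1 ∨ sgn (1 / 2) x n = -1 := by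
  cases n with
  | zero => exact (Real.sign_apply_eq_of_ne_zero _ (hx.sub_intCast _).ne_zero).symm
  | succ n =>
    have hz : Irrational (1 / xseq (1 / 2) x n) := by
      simpa only [one_div] using (xseq_half_mem hx hdom n).1.inv
    exact (Real.sign_apply_eq_of_ne_zero _ (hz.sub_intCast _).ne_zero).symm

lemma qconv_zero (α x : ℝ) : qconv α x 0 = 1 := by
  simp [qconv, Mmat]

lemma Mmat_zero_one_zero (α x : ℝ) : Mmat α x 0 1 0 = 0 := by
  simp [Mmat]

lemma Mmat_succ_one_zero (α x : ℝ) (n : ℕ) : Mmat α x (n + 1) 1 0 = qconv α x n := by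
  simp [qconv, Mmat, Matrix.mul_apply, Fin.sum_univ_two]

lemma qconv_succ (α x : ℝ) (n : ℕ) :
    qconv α x (n + 1) = dig α x (n + 1) * qconv α x n + sgn α x n * Mmat α x n 1 0 := by
  simp [qconv, Mmat, Matrix.mul_apply, Fin.sum_univ_two, mul_comm, add_comm]

/-- `q`, `r` are consecutive denominators `q_n`, `q_{n-1}` and `ε = ε_n`. -/
structure GoldenGrowth (q r ε : ℝ) : Prop where
  prev_nonneg : 0 ≤ r
  pos : 0 < q
  gold_mul_le : φ * r ≤ q
  gold_sq_mul_le : ε = -1 → φ ^ 2 * r ≤ q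

lemma two_sub_goldenRatio_mul_sq : (2 - φ) * φ ^ 2 = 1 := by
  linear_combination (1 - φ) * goldenRatio_sq

lemma GoldenGrowth.step {q r ε ε' a : ℝ} (h : GoldenGrowth q r ε) (hε : ε = 1 ∨ ε = -1)
    (ha : 2 ≤ a) (ha' : ε' = -1 → 3 ≤ a) : GoldenGrowth (a * q + ε * r) q ε' := by
  have hφ0 := goldenRatio_pos
  have hφ2 := goldenRatio_lt_two
  have hφsq := goldenRatio_sq
  have hr := h.prev_nonneg
  have hq := h.pos
  have hgold : φ * q ≤ a * q + ε * r ∧ (3 ≤ a → φ ^ 2 * q ≤ a * q + ε * r) := by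
    rcases hε with rfl | rfl
    · constructor <;> intros <;> nlinarith
    · have hpay : r ≤ (2 - φ) * q := by
        have := mul_le_mul_of_nonneg_left (h.gold_sq_mul_le rfl) (by linarith : 0 ≤ 2 - φ)
        rwa [← mul_assoc, two_sub_goldenRatio_mul_sq, one_mul] at this
      constructor <;> intros <;> nlinarith
  exact ⟨hq.le, (mul_pos hφ0 hq).trans_le hgold.1, hgold.1, fun h' => hgold.2 (ha' h')⟩

lemma goldenGrowth_qconv_half {x : ℝ} (hx : Irrational x) (hdom : x ∈ Ioo 0 (1 / 2)) (n : ℕ) :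
    GoldenGrowth (qconv (1 / 2) x n) (Mmat (1 / 2) x n 1 0) (sgn (1 / 2) x n) := by
  induction n with
  | zero =>
    rw [qconv_zero, Mmat_zero_one_zero]
    exact ⟨le_rfl, one_pos, by simp, fun _ => by simp⟩
  | succ n ih =>
    rw [qconv_succ, Mmat_succ_one_zero]
    exact ih.step (sgn_half_eq_one_or_neg_one hx hdom n)
      (mod_cast two_le_dig_half_succ hx hdom n)
      (fun h => mod_cast three_le_dig_half_succ hx hdom n h)

/-- (Hurwitz) For the nearest-integer continued fraction (`α = 1/2`), the denominators
of the convergents of any irrational `x` satisfy `q'_n / q'_{n+1} ≤ g = (√5−1)/2`. -/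
theorem stmt13 (x : ℝ) (hx : Irrational x) (hdom : x ∈ Set.Ioo 0 (1 / 2 : ℝ)) :
    ∀ n : ℕ, qconv (1 / 2) x n / qconv (1 / 2) x (n + 1) ≤ (Real.sqrt 5 - 1) / 2 := by
  intro n
  have h := goldenGrowth_qconv_half hx hdom (n + 1)
  rw [Mmat_succ_one_zero] at h
  have hg : (Real.sqrt 5 - 1) / 2 = φ⁻¹ := by
    rw [inv_goldenRatio]
    ring
  rw [hg, div_le_iff₀ h.pos, inv_mul_eq_div, le_div_iff₀ goldenRatio_pos, mul_comm]
  exact h.gold_mul_le
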